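/- arXiv:1001.2766 — 2 statements merged into one kernel-verified Lean document; each statement's English description precedes it below -/
import Mathlib

section
/- Let $(B_n)_{n \geq 1}$ be i.i.d. Bernoulli(1/2) random variables and let $(Z_n)$ be any adapted process with values in $[0,1]$ satisfying $Z_{n+1} = Z_n^2$ if $B_{n+1}=1$ and $Z_n\sqrt{2-Z_n^2} \leq Z_{n+1} \leq 2Z_n - Z_n^2$ if $B_{n+1}=0$, with $Z_0 = z_0 \in [0,1]$. Define $Q_n = Z_n(1-Z_n)$. Then $\mathbb{E}[Q_n^{1/2}] \leq \frac{1}{2}\left(\frac{1.85}{2}\right)^n$. -/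
/-!
Given `Z_n = z`, the next value of `√Q` is `√(z²(1 - z²))` or `√(w(1 - w))` for some
`w ∈ [z√(2 - z²), 2z - z²]`, each with probability `1/2` and independently of `Z_n`. Hence the
pointwise inequality `√(w(1 - w)) + √(z²(1 - z²)) ≤ 1.85 √(z(1 - z))` gives
`E √Q_{n+1} ≤ (1.85/2) E √Q_n`, while `√Q_0 ≤ 1/2`.

Writing `√(z²(1 - z²)) = √(z(1 - z)) √(z + z²)`, the pointwise inequality follows from
`w(1 - w) ≤ z(1 - z)(1.85 - √(z + z²))²` unless `1/2` lies strictly inside the interval of `w`,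
in which case `√(w(1 - w)) ≤ 1/2` and `z` is confined to `[1/4, 0.38]`. Since `w(1 - w)` is
maximised at the endpoint of the interval nearest `1/2`, only the endpoints matter. The left
endpoint leaves an inequality between a cubic and two square roots, tight at `z = 1` and nearly
so near `z = 0.68`; it is checked by replacing the square roots by tangent bounds on three
subintervals.
-/

open MeasureTheory ProbabilityTheory Set Real

lemma sqrt_le_add_sq_div {x c : ℝ} (hx : 0 ≤ x) (hc : 0 < c) : √x ≤ (x + c ^ 2) / (2 * c) := by
  rw [le_div_iff₀ (by positivity)]
  nlinarith [two_mul_le_add_sq c √x, sq_sqrt hx]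

lemma sqrt_mul_one_sub_le_half (x : ℝ) : √(x * (1 - x)) ≤ 1 / 2 :=
  sqrt_le_iff.2 ⟨by norm_num, by nlinarith [sq_nonneg (x - 1 / 2)]⟩

section Inequalities

variable {z : ℝ}

lemma sqrt_two_sub_sq_add_le_of_tangents (hz : z ∈ Icc (0 : ℝ) 1) (c d : ℝ)
    (hc : 0 < c) (hd : 0 < d)
    (h : (2 - z ^ 2 + c ^ 2) / (2 * c) + 3.7 * (1 - z) * ((z + z ^ 2 + d ^ 2) / (2 * d)) ≤
      3.4225 - 0.4225 * z - 2 * z ^ 3) :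
    √(2 - z ^ 2) + 3.7 * (1 - z) * √(z + z ^ 2) ≤ 3.4225 - 0.4225 * z - 2 * z ^ 3 := by
  obtain ⟨hz0, hz1⟩ := hz
  have hu := sqrt_le_add_sq_div (x := 2 - z ^ 2) (by nlinarith) hc
  have ht := sqrt_le_add_sq_div (x := z + z ^ 2) (by positivity) hd
  nlinarith [mul_le_mul_of_nonneg_left ht (by linarith : 0 ≤ 3.7 * (1 - z))]

/-- This is `a(1 - a) ≤ z(1 - z)(1.85 - √(z + z²))²` for `a = z√(2 - z²)`, divided by `z`.
On each subinterval `[lo, hi]` the tangent points `c, d` are `√(2 - m²), √(m + m²)` rounded, for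
some `m ∈ [lo, hi]`, and the remaining cubic inequality is a nonnegative combination of
`(z - lo)(hi - z)`, `(hi - z)(z - r)²` and the linear constraints. -/
lemma sqrt_two_sub_sq_add_le (hz : z ∈ Icc (9 / 25 : ℝ) 1) :
    √(2 - z ^ 2) + 3.7 * (1 - z) * √(z + z ^ 2) ≤ 3.4225 - 0.4225 * z - 2 * z ^ 3 := by
  obtain ⟨hlo, hhi⟩ := hz
  have hz₀₁ : z ∈ Icc (0 : ℝ) 1 := ⟨by linarith, hhi⟩
  rcases le_or_gt z (18 / 25) with h₁ | h₁
  · refine sqrt_two_sub_sq_add_le_of_tangents hz₀₁ 1.24 1.06 (by norm_num) (by norm_num) ?_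
    norm_num
    linarith [mul_nonneg (sub_nonneg.2 hlo) (sub_nonneg.2 h₁),
      mul_nonneg (sub_nonneg.2 h₁) (sq_nonneg (z - 54 / 125))]
  rcases le_or_gt z (23 / 25) with h₂ | h₂
  · refine sqrt_two_sub_sq_add_le_of_tangents hz₀₁ 1.188 1.165 (by norm_num) (by norm_num) ?_
    norm_num
    linarith [mul_nonneg (sub_nonneg.2 h₁.le) (sub_nonneg.2 h₂),
      mul_nonneg (sub_nonneg.2 h₂) (sq_nonneg (z - 18 / 25))]
  refine sqrt_two_sub_sq_add_le_of_tangents hz₀₁ 1 1.41 (by norm_num) (by norm_num) ?_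
  norm_num
  linarith [mul_nonneg (sub_nonneg.2 h₂.le) (sub_nonneg.2 hhi),
    mul_nonneg (sub_nonneg.2 hhi) (sq_nonneg (z - 23 / 25))]

lemma one_sub_mul_two_sub_le (hz : 0 ≤ z) :
    (1 - z) * (2 - z) ≤ (1.85 - √(z + z ^ 2)) ^ 2 := by
  have ht := sq_sqrt (by positivity : 0 ≤ z + z ^ 2)
  have h : 3.7 * √(z + z ^ 2) ≤ 1.4225 + 4 * z := by
    nlinarith [sqrt_nonneg (z + z ^ 2), sq_nonneg (z - 1 / 2)]
  nlinarith

lemma add_half_le_mul_sqrt (hz₁ : 1 / 4 ≤ z) (hz₂ : z ≤ 19 / 50) :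
    z + 1 / 2 ≤ 1.85 * √(z * (1 - z)) := by
  have hr := sq_sqrt (by nlinarith : 0 ≤ z * (1 - z))
  nlinarith [sqrt_nonneg (z * (1 - z)), mul_nonneg (sub_nonneg.2 hz₁) (sub_nonneg.2 hz₂)]

lemma sqrt_mul_one_sub_add_le {w : ℝ} (hz : z ∈ Icc (0 : ℝ) 1)
    (hw₁ : z * √(2 - z ^ 2) ≤ w) (hw₂ : w ≤ 2 * z - z ^ 2) :
    √(w * (1 - w)) + √(z ^ 2 * (1 - z ^ 2)) ≤ 1.85 * √(z * (1 - z)) := by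
  obtain ⟨hz0, hz1⟩ := hz
  set t := √(z + z ^ 2) with ht_def
  set u := √(2 - z ^ 2)
  have ht : t ^ 2 = z + z ^ 2 := sq_sqrt (by positivity)
  have hu : u ^ 2 = 2 - z ^ 2 := sq_sqrt (by nlinarith)
  have hrt : √(z * (1 - z)) * t = √(z ^ 2 * (1 - z ^ 2)) := by
    rw [ht_def, ← sqrt_mul (by nlinarith)]
    ring_nf
  have of_sq_le (h : w * (1 - w) ≤ z * (1 - z) * (1.85 - t) ^ 2) :
      √(w * (1 - w)) + √(z ^ 2 * (1 - z ^ 2)) ≤ 1.85 * √(z * (1 - z)) := by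
    have ht_le : t ≤ 1.85 := sqrt_le_iff.2 ⟨by norm_num, by nlinarith⟩
    have := sqrt_le_sqrt h
    rw [sqrt_mul' _ (sq_nonneg _), sqrt_sq (by linarith)] at this
    linarith
  have hzu : 0 ≤ z * u := mul_nonneg hz0 (sqrt_nonneg _)
  have hzu_sq : (z * u) ^ 2 = z ^ 2 * (2 - z ^ 2) := by rw [mul_pow, hu]
  rcases le_or_gt (1 / 2) (z * u) with ha | ha
  · have hz' : 9 / 25 ≤ z := by
      by_contra! h
      nlinarith [mul_nonneg (by nlinarith : 0 ≤ (9 / 25) ^ 2 - z ^ 2)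
        (by nlinarith : 0 ≤ 2 - z ^ 2 - (9 / 25) ^ 2)]
    have hG := mul_le_mul_of_nonneg_left (sqrt_two_sub_sq_add_le ⟨hz', hz1⟩) hz0
    apply of_sq_le
    nlinarith
  rcases le_or_gt (2 * z - z ^ 2) (1 / 2) with hb | hb
  · apply of_sq_le
    nlinarith [mul_le_mul_of_nonneg_left (one_sub_mul_two_sub_le hz0)
      (by nlinarith : 0 ≤ z * (1 - z))]
  · have hz₁ : 1 / 4 ≤ z := by nlinarith
    have hz₂ : z ≤ 19 / 50 := by
      by_contra! h
      nlinarith [mul_nonneg (by nlinarith : 0 ≤ z ^ 2 - (19 / 50) ^ 2)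
        (by nlinarith : 0 ≤ 2 - z ^ 2 - (19 / 50) ^ 2)]
    have hs : √(z ^ 2 * (1 - z ^ 2)) ≤ z := by
      rw [sqrt_mul (sq_nonneg z), sqrt_sq hz0]
      exact mul_le_of_le_one_right hz0 (sqrt_le_one.2 (by nlinarith))
    linarith [sqrt_mul_one_sub_le_half w, add_half_le_mul_sqrt hz₁ hz₂]

end Inequalities

lemma MeasurableSpace.comap_pi_le_iSup_comap {Ω ι κ : Type*} {β : ι → Type*}
    [∀ i, MeasurableSpace (β i)] (B : ∀ i, Ω → β i) (g : κ → ι) {S : Set ι} (hg : ∀ i, g i ∈ S) :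
    MeasurableSpace.comap (fun ω (i : κ) ↦ B (g i) ω) inferInstance ≤
      ⨆ j ∈ S, MeasurableSpace.comap (B j) inferInstance := by
  refine Measurable.comap_le (@measurable_pi_lambda _ _ _ (⨆ j ∈ S, _) _ _
    fun i ↦ Measurable.of_comap_le ?_)
  exact le_iSup₂ (f := fun j (_ : j ∈ S) ↦ MeasurableSpace.comap (B j) inferInstance) (g i) (hg i)

section Probability

variable {Ω : Type*} [MeasurableSpace Ω] {μ : Measure Ω}

lemma integrable_sqrt_mul_one_sub [IsFiniteMeasure μ] {f : Ω → ℝ} (hf : Measurable f) :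
    Integrable (fun ω ↦ √(f ω * (1 - f ω))) μ :=
  .of_bound (by fun_prop) (1 / 2) <| ae_of_all _ fun ω ↦ by
    rw [norm_of_nonneg (sqrt_nonneg _)]
    exact sqrt_mul_one_sub_le_half _

lemma integral_comp_bool_of_measure_eq_half [IsProbabilityMeasure μ] {b : Ω → Bool}
    (hb : Measurable b) (hhalf : μ {ω | b ω = true} = 1 / 2) (c : Bool → ℝ) :
    ∫ ω, c (b ω) ∂μ = (c true + c false) / 2 := by
  have := Measure.isProbabilityMeasure_map (μ := μ) hb.aemeasurable
  have htrue : (μ.map b).real {true} = 1 / 2 := by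
    rw [measureReal_def, Measure.map_apply hb (measurableSet_singleton _)]
    simp [Set.preimage, hhalf]
  have hfalse : (μ.map b).real {false} = 1 / 2 := by
    rw [show ({false} : Set Bool) = {true}ᶜ by ext; simp,
      probReal_compl_eq_one_sub (measurableSet_singleton _), htrue]
    norm_num
  rw [← integral_map hb.aemeasurable Measurable.of_discrete.aestronglyMeasurable,
    integral_fintype Integrable.of_finite]
  rw [Fintype.sum_bool, htrue, hfalse, smul_eq_mul, smul_eq_mul]
  ring

variable {β : Type*} {X : Ω → β} {b : Ω → Bool} {F : Bool → β → ℝ}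

lemma integrable_comp_bool (hb : Measurable b) (hFi : ∀ v, Integrable (fun ω ↦ F v (X ω)) μ) :
    Integrable (fun ω ↦ F (b ω) (X ω)) μ := by
  have hsplit : (fun ω ↦ F (b ω) (X ω)) = {ω | b ω = true}.indicator (fun ω ↦ F true (X ω)) +
      {ω | b ω = false}.indicator (fun ω ↦ F false (X ω)) := by
    ext ω
    cases h : b ω <;> simp [h]
  rw [hsplit]
  exact ((hFi true).indicator (hb (measurableSet_singleton _))).add
    ((hFi false).indicator (hb (measurableSet_singleton _)))

lemma ProbabilityTheory.IndepFun.integral_comp_bool [MeasurableSpace β] [IsProbabilityMeasure μ]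
    (hind : IndepFun X b μ)
    (hX : Measurable X) (hb : Measurable b) (hhalf : μ {ω | b ω = true} = 1 / 2)
    (hF : ∀ v, Measurable (F v)) (hFi : ∀ v, Integrable (fun ω ↦ F v (X ω)) μ) :
    ∫ ω, F (b ω) (X ω) ∂μ = (∫ ω, F true (X ω) ∂μ + ∫ ω, F false (X ω) ∂μ) / 2 := by
  let χ (v : Bool) : Bool → ℝ := fun v' ↦ if v' = v then 1 else 0
  have hprod (v : Bool) : ∫ ω, F v (X ω) * χ v (b ω) ∂μ = (∫ ω, F v (X ω) ∂μ) / 2 := by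
    refine (hind.integral_comp_mul_comp (f := F v) (g := χ v) hX.aemeasurable hb.aemeasurable
      (hF v).aestronglyMeasurable Measurable.of_discrete.aestronglyMeasurable).trans ?_
    change (∫ ω, F v (X ω) ∂μ) * ∫ ω, χ v (b ω) ∂μ = _
    rw [integral_comp_bool_of_measure_eq_half hb hhalf]
    cases v <;> simp [χ, div_eq_mul_inv]
  have hint (v : Bool) : Integrable (fun ω ↦ F v (X ω) * χ v (b ω)) μ :=
    (hFi v).mul_bdd (c := 1) ((Measurable.of_discrete (f := χ v)).comp hb).aestronglyMeasurable
      (ae_of_all _ fun ω ↦ by by_cases h : b ω = v <;> simp [χ, h])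
  have hsplit : (fun ω ↦ F (b ω) (X ω)) =
      fun ω ↦ F true (X ω) * χ true (b ω) + F false (X ω) * χ false (b ω) := by
    ext ω
    cases b ω <;> simp [χ]
  rw [hsplit, integral_add (hint true) (hint false), hprod, hprod, add_div]

lemma ProbabilityTheory.iIndepFun.indepFun_of_measurable_iSup {ι : Type*} {β : ι → Type*}
    [∀ i, MeasurableSpace (β i)] {B : ∀ i, Ω → β i} (hB : iIndepFun B μ)
    (hBm : ∀ i, Measurable (B i)) {S : Set ι} {k : ι} (hk : k ∉ S) {γ : Type*}
    [MeasurableSpace γ] {Y : Ω → γ}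
    (hY : Measurable[⨆ i ∈ S, MeasurableSpace.comap (B i) inferInstance] Y) :
    IndepFun Y (B k) μ := by
  rw [IndepFun_iff_Indep]
  have := indep_iSup_of_disjoint (fun i ↦ (hBm i).comap_le) ((iIndepFun_iff_iIndep _ _ _).1 hB)
    (Set.disjoint_singleton_right.2 hk)
  exact indep_of_indep_of_le_right (indep_of_indep_of_le_left this hY.comap_le)
    (le_iSup₂ (f := fun i (_ : i ∈ ({k} : Set ι)) ↦ MeasurableSpace.comap (B i) inferInstance)
      k rfl)

lemma integral_sqrt_mul_one_sub_le_of_step [IsProbabilityMeasure μ] {X Y : Ω → ℝ}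
    (hX : Measurable X) (hY : Measurable Y) (hb : Measurable b) (hind : IndepFun X b μ)
    (hhalf : μ {ω | b ω = true} = 1 / 2) (hXrange : ∀ ω, X ω ∈ Icc (0 : ℝ) 1)
    (hstep : ∀ᵐ ω ∂μ, (b ω = true → Y ω = X ω ^ 2) ∧
      (b ω = false → X ω * √(2 - X ω ^ 2) ≤ Y ω ∧ Y ω ≤ 2 * X ω - X ω ^ 2)) :
    ∫ ω, √(Y ω * (1 - Y ω)) ∂μ ≤ 1.85 / 2 * ∫ ω, √(X ω * (1 - X ω)) ∂μ := by
  let F : Bool → ℝ → ℝ := fun v z ↦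
    cond v √(z ^ 2 * (1 - z ^ 2)) (1.85 * √(z * (1 - z)) - √(z ^ 2 * (1 - z ^ 2)))
  have hF : ∀ v, Measurable (F v) := by
    rintro (_ | _) <;> simp only [F, cond_true, cond_false] <;> fun_prop
  have hFi : ∀ v, Integrable (fun ω ↦ F v (X ω)) μ := by
    have hsq := integrable_sqrt_mul_one_sub (μ := μ) (hX.pow_const 2)
    rintro (_ | _)
    · exact ((integrable_sqrt_mul_one_sub hX).const_mul 1.85).sub hsq
    · exact hsq
  have hle : ∀ᵐ ω ∂μ, √(Y ω * (1 - Y ω)) ≤ F (b ω) (X ω) := by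
    filter_upwards [hstep] with ω ⟨htrue, hfalse⟩
    cases h : b ω
    · have := sqrt_mul_one_sub_add_le (hXrange ω) (hfalse h).1 (hfalse h).2
      simp only [F, cond_false]
      linarith
    · simp [F, htrue h]
  calc ∫ ω, √(Y ω * (1 - Y ω)) ∂μ ≤ ∫ ω, F (b ω) (X ω) ∂μ :=
        integral_mono_ae (integrable_sqrt_mul_one_sub hY) (integrable_comp_bool hb hFi) hle
    _ = 1.85 / 2 * ∫ ω, √(X ω * (1 - X ω)) ∂μ := by
        rw [hind.integral_comp_bool hX hb hhalf hF hFi, ← integral_add (hFi true) (hFi false)]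
        simp only [F, cond_true, cond_false, add_sub_cancel, integral_const_mul]
        ring

end Probability

theorem sqrt_Q_decay_general {Ω : Type*} [MeasurableSpace Ω] (μ : Measure Ω)
    [IsProbabilityMeasure μ]
    (B : ℕ → Ω → Bool) (hBmeas : ∀ n, Measurable (B n))
    (hBindep : iIndepFun B μ)
    (hBhalf : ∀ n, μ {ω | B n ω = true} = 1/2)
    (Z : ℕ → Ω → ℝ) (hZmeas : ∀ n, Measurable (Z n))
    (hZadapted : ∀ n, @Measurable Ω ℝ
      (MeasurableSpace.comap (fun ω (i : Fin n) => B (i+1) ω) inferInstance) _ (Z n))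
    (z0 : ℝ) (hZ0 : ∀ ω, Z 0 ω = z0)
    (hrange : ∀ n ω, Z n ω ∈ Set.Icc (0:ℝ) 1)
    (hrec : ∀ n, ∀ᵐ ω ∂μ,
      (B (n+1) ω = true → Z (n+1) ω = (Z n ω)^2) ∧
      (B (n+1) ω = false →
        Z n ω * Real.sqrt (2 - (Z n ω)^2) ≤ Z (n+1) ω ∧
        Z (n+1) ω ≤ 2 * Z n ω - (Z n ω)^2)) :
    ∀ n, ∫ ω, Real.sqrt (Z n ω * (1 - Z n ω)) ∂μ ≤ (1/2) * (1.85/2)^n := by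
  have hind (n : ℕ) : IndepFun (Z n) (B (n + 1)) μ := by
    refine hBindep.indepFun_of_measurable_iSup hBmeas (S := Iic n) (by simp) ?_
    exact (hZadapted n).mono
      (MeasurableSpace.comap_pi_le_iSup_comap B (fun i : Fin n ↦ (i : ℕ) + 1)
        fun i ↦ Nat.succ_le_of_lt i.isLt) le_rfl
  intro n
  induction n with
  | zero => simpa [hZ0] using sqrt_mul_one_sub_le_half z0
  | succ n ih =>
    calc ∫ ω, √(Z (n + 1) ω * (1 - Z (n + 1) ω)) ∂μ
        ≤ 1.85 / 2 * ∫ ω, √(Z n ω * (1 - Z n ω)) ∂μ :=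
          integral_sqrt_mul_one_sub_le_of_step (hZmeas n) (hZmeas (n + 1)) (hBmeas (n + 1))
            (hind n) (hBhalf (n + 1)) (hrange n) (hrec n)
      _ ≤ 1.85 / 2 * (1 / 2 * (1.85 / 2) ^ n) := by gcongr
      _ = 1 / 2 * (1.85 / 2) ^ (n + 1) := by ring

theorem sqrt_Q_decay {Ω : Type*} [MeasurableSpace Ω] (μ : Measure Ω)
    [IsProbabilityMeasure μ]
    (B : ℕ → Ω → Bool) (hBmeas : ∀ n, Measurable (B n))
    (hBindep : iIndepFun B μ)
    (hBhalf : ∀ n, μ {ω | B n ω = true} = 1/2)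
    (Z : ℕ → Ω → ℝ) (hZmeas : ∀ n, Measurable (Z n))
    (hZadapted : ∀ n, @Measurable Ω ℝ
      (MeasurableSpace.comap (fun ω (i : Fin n) => B (i+1) ω) inferInstance) _ (Z n))
    (z0 : ℝ) (hz0 : z0 ∈ Set.Icc (0:ℝ) 1) (hZ0 : ∀ ω, Z 0 ω = z0)
    (hrange : ∀ n ω, Z n ω ∈ Set.Icc (0:ℝ) 1)
    (hrec : ∀ n, ∀ᵐ ω ∂μ,
      (B (n+1) ω = true → Z (n+1) ω = (Z n ω)^2) ∧
      (B (n+1) ω = false →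
        Z n ω * Real.sqrt (2 - (Z n ω)^2) ≤ Z (n+1) ω ∧
        Z (n+1) ω ≤ 2 * Z n ω - (Z n ω)^2)) :
    ∀ n, ∫ ω, Real.sqrt (Z n ω * (1 - Z n ω)) ∂μ ≤ (1/2) * (1.85/2)^n :=
  sqrt_Q_decay_general μ B hBmeas hBindep hBhalf Z hZmeas hZadapted z0 hZ0 hrange hrec
end

section
/- Let $(B_n)_{n\geq 1}$ be i.i.d. Bernoulli(1/2) and define the process $Z_n^u$ by $Z_0^u = z_0 \in (0,1)$, $Z_{n+1}^u = (Z_n^u)^2$ if $B_{n+1}=1$ and $Z_{n+1}^u = 2Z_n^u$ if $B_{n+1}=0$. Then for every $\beta > 0$ with $2^{-\beta} > z_0$ and every $n$, $\mathbb{P}\big(Z_n^u \leq 2^{-\beta \, 2^{\sum_{i=1}^n B_i}}\big) \geq 1 - 2^{1+\beta/2}\sqrt{z_0}$. -/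
/-!
Taking `log₂`, a squaring step doubles `a = log₂ Z` and a doubling step adds one, so after the
bits `b₁ … bₙ` with `S` ones one has `log₂ Zₙ = 2^S (log₂ z₀ + D)`, where the drift
`D = logDrift [b₁, …, bₙ]` obeys `D(1 :: l) = D(l) / 2` and `D(0 :: l) = 1 + D(l)`. The good event is `D ≤ δ := -log₂ z₀ - β`.
By the recursion, `p_n(δ) = P(D > δ)` satisfies `p_{n+1}(δ) = (p_n(2δ) + p_n(δ - 1)) / 2`, and
`φ = driftTailBound` is a supersolution of this recursion dominating `p_0`, hence
`p_n ≤ φ` for all `n`; finally `2^{1 - δ/2} = 2^{1 + β/2} √z₀`.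
-/

open MeasureTheory ProbabilityTheory Finset

noncomputable def logDrift : List Bool → ℝ
  | [] => 0
  | true :: l => logDrift l / 2
  | false :: l => 1 + logDrift l

lemma logDrift_concat (l : List Bool) (b : Bool) :
    logDrift (l.concat b) = logDrift l + if b then 0 else ((2 : ℝ) ^ l.count true)⁻¹ := by
  induction l with
  | nil => cases b <;> simp [logDrift]
  | cons x l ih =>
    cases x <;> cases b <;>
      simp only [List.concat_cons, logDrift, ih, List.count_cons_self, List.count_cons_of_ne,
        ne_eq, Bool.false_eq_true, not_false_eq_true, ↓reduceIte, add_zero, pow_succ,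
        mul_inv_rev] <;> ring

lemma count_true_ofFn (g : ℕ → Bool) (n : ℕ) :
    (List.ofFn fun i : Fin n ↦ g i).count true = ∑ i ∈ range n, if g i then 1 else 0 := by
  induction n with
  | zero => simp
  | succ n ih =>
    rw [List.ofFn_succ', sum_range_succ, List.concat_eq_append, List.count_append]
    cases h : g n <;> simp [ih, h]

def IsUpperOrbit (b : ℕ → Bool) (z : ℕ → ℝ) : Prop :=
  ∀ n, (b n = true → z (n + 1) = z n ^ 2) ∧ (b n = false → z (n + 1) = 2 * z n)

namespace IsUpperOrbit

variable {b : ℕ → Bool} {z : ℕ → ℝ}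

lemma pos (hz : IsUpperOrbit b z) (hz0 : 0 < z 0) (n : ℕ) : 0 < z n := by
  induction n with
  | zero => exact hz0
  | succ n ih =>
    cases hb : b n
    · rw [(hz n).2 hb]; positivity
    · rw [(hz n).1 hb]; positivity

lemma logb_eq (hz : IsUpperOrbit b z) (hz0 : 0 < z 0) (n : ℕ) :
    Real.logb 2 (z n) = 2 ^ (List.ofFn fun i : Fin n ↦ b i).count true *
      (Real.logb 2 (z 0) + logDrift (List.ofFn fun i : Fin n ↦ b i)) := by
  induction n with
  | zero => simp [logDrift]
  | succ n ih =>
    rw [List.ofFn_succ']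
    simp only [Fin.val_castSucc, Fin.val_last, logDrift_concat]
    cases hb : b n
    · rw [(hz n).2 hb, Real.logb_mul two_ne_zero (hz.pos hz0 n).ne',
        Real.logb_self_eq_one one_lt_two, ih]
      simp only [List.concat_eq_append, List.count_append, List.count_singleton, beq_iff_eq,
        Bool.false_eq_true, ↓reduceIte, add_zero]
      field_simp
      ring
    · rw [(hz n).1 hb, Real.logb_pow, ih]
      simp only [List.count_concat_self, ↓reduceIte, add_zero, pow_succ, Nat.cast_ofNat]
      ring

lemma le_two_rpow_iff (hz : IsUpperOrbit b z) (hz0 : 0 < z 0) (n : ℕ) (β : ℝ) :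
    z n ≤ 2 ^ (-(β * 2 ^ (∑ i ∈ range n, if b i then 1 else 0))) ↔
      logDrift (List.ofFn fun i : Fin n ↦ b i) ≤ -Real.logb 2 (z 0) - β := by
  rw [← Real.logb_le_iff_le_rpow one_lt_two (hz.pos hz0 n), hz.logb_eq hz0, count_true_ofFn,
    neg_mul_eq_neg_mul, mul_comm (-β), mul_le_mul_iff_right₀ (by positivity)]
  constructor <;> intro h <;> linarith

end IsUpperOrbit

lemma card_logDrift_gt_succ (n : ℕ) (δ : ℝ) :
    #{b : Fin (n + 1) → Bool | δ < logDrift (List.ofFn b)} =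
      #{b : Fin n → Bool | 2 * δ < logDrift (List.ofFn b)} +
        #{b : Fin n → Bool | δ - 1 < logDrift (List.ofFn b)} := by
  simp only [card_filter]
  rw [← (Fin.consEquiv fun _ ↦ Bool).sum_comp, Fintype.sum_prod_type, Fintype.sum_bool]
  congr 1 <;> refine sum_congr rfl fun v _ ↦ if_congr ?_ rfl rfl <;>
    simp only [List.ofFn_succ, Fin.consEquiv_apply, Fin.cons_zero, Fin.cons_succ, logDrift]
  · rw [lt_div_iff₀ two_pos, mul_comm]
  · rw [sub_lt_iff_lt_add']

noncomputable def driftTailBound (δ : ℝ) : ℝ := min 1 ((2 : ℝ) ^ (1 - δ / 2))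

lemma driftTailBound_nonneg (δ : ℝ) : 0 ≤ driftTailBound δ :=
  le_min zero_le_one (by positivity)

lemma driftTailBound_le_one (δ : ℝ) : driftTailBound δ ≤ 1 := min_le_left _ _

lemma driftTailBound_eq_one {δ : ℝ} (h : δ ≤ 2) : driftTailBound δ = 1 :=
  min_eq_left (Real.one_le_rpow one_le_two (by linarith))

lemma driftTailBound_add_le (δ : ℝ) :
    driftTailBound (2 * δ) + driftTailBound (δ - 1) ≤ 2 * driftTailBound δ := by
  rcases le_or_gt δ 2 with hδ | hδ
  · rw [driftTailBound_eq_one hδ]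
    linarith [driftTailBound_le_one (2 * δ), driftTailBound_le_one (δ - 1)]
  set t : ℝ := (2 : ℝ) ^ (-(δ / 2))
  have ht : t ≤ 1 / 2 := by
    have := Real.rpow_le_rpow_of_exponent_le one_le_two (show -(δ / 2) ≤ -1 by linarith)
    rwa [Real.rpow_neg_one, ← one_div] at this
  have ht0 : 0 < t := by positivity
  have hpow (a : ℝ) : (2 : ℝ) ^ (a - δ / 2) = 2 ^ a * t := by
    rw [sub_eq_add_neg, Real.rpow_add two_pos]
  have h1 : driftTailBound δ = 2 * t := by
    rw [driftTailBound, hpow, Real.rpow_one]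
    exact min_eq_right (by linarith)
  have h2 : driftTailBound (2 * δ) ≤ 2 * t ^ 2 := by
    refine (min_le_right _ _).trans_eq ?_
    rw [show 1 - 2 * δ / 2 = (1 - δ / 2) - δ / 2 by ring, hpow, hpow, Real.rpow_one]; ring
  have h3 : driftTailBound (δ - 1) ≤ 2 * √2 * t := by
    refine (min_le_right _ _).trans_eq ?_
    rw [show 1 - (δ - 1) / 2 = (1 + 1 / 2) - δ / 2 by ring, hpow, Real.rpow_add two_pos,
      Real.rpow_one, ← Real.sqrt_eq_rpow]
  nlinarith [Real.sqrt_two_lt_three_halves]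

lemma card_logDrift_gt_le (n : ℕ) (δ : ℝ) :
    (#{b : Fin n → Bool | δ < logDrift (List.ofFn b)} : ℝ) ≤ 2 ^ n * driftTailBound δ := by
  induction n generalizing δ with
  | zero =>
    simp only [logDrift, List.ofFn_zero, pow_zero, one_mul]
    rcases lt_or_ge δ 0 with hδ | hδ
    · rw [driftTailBound_eq_one (by linarith)]
      exact_mod_cast (card_filter_le _ _).trans_eq (by simp)
    · simp [hδ.not_gt, driftTailBound_nonneg]
  | succ n ih =>
    rw [card_logDrift_gt_succ, Nat.cast_add, pow_succ]
    nlinarith [ih (2 * δ), ih (δ - 1), driftTailBound_add_le δ, pow_pos (two_pos (α := ℝ)) n]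

section FairBits

variable {Ω : Type*} [MeasurableSpace Ω] {μ : Measure Ω} [IsProbabilityMeasure μ]

lemma measure_preimage_singleton_of_fair {X : Ω → Bool} (hX : Measurable X)
    (hfair : μ {ω | X ω = true} = 1 / 2) (x : Bool) : μ (X ⁻¹' {x}) = 2⁻¹ := by
  have htrue : μ (X ⁻¹' {true}) = 2⁻¹ := by
    rw [← one_div]; exact hfair
  cases x with
  | true => exact htrue
  | false =>
    have hcompl : X ⁻¹' {false} = (X ⁻¹' {true})ᶜ := by ext ω; simp
    rw [hcompl, measure_compl (hX trivial) (measure_ne_top μ _), htrue, measure_univ,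
      ENNReal.one_sub_inv_two]

lemma measure_preimage_finset_of_iIndepFun_fair {n : ℕ} {X : Fin n → Ω → Bool}
    (hX : ∀ i, Measurable (X i)) (hind : iIndepFun X μ)
    (hfair : ∀ i, μ {ω | X i ω = true} = 1 / 2) (A : Finset (Fin n → Bool)) :
    μ ((fun ω i ↦ X i ω) ⁻¹' A) = #A * 2⁻¹ ^ n := by
  have hfiber (b : Fin n → Bool) : μ ((fun ω i ↦ X i ω) ⁻¹' {b}) = 2⁻¹ ^ n := by
    have hcell : (fun ω i ↦ X i ω) ⁻¹' {b} = ⋂ i ∈ (univ : Finset (Fin n)), X i ⁻¹' {b i} := by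
      ext ω; simp [funext_iff]
    rw [hcell, hind.measure_inter_preimage_eq_mul _ fun _ _ ↦ trivial]
    simp [measure_preimage_singleton_of_fair (hX _) (hfair _)]
  rw [← sum_measure_preimage_singleton A fun b _ ↦ measurableSet_preimage
    (measurable_pi_lambda _ hX) (measurableSet_singleton b)]
  simp [hfiber]

lemma measureReal_logDrift_gt_le {n : ℕ} {X : Fin n → Ω → Bool} (hX : ∀ i, Measurable (X i))
    (hind : iIndepFun X μ) (hfair : ∀ i, μ {ω | X i ω = true} = 1 / 2) (δ : ℝ) :
    μ.real {ω | δ < logDrift (List.ofFn fun i ↦ X i ω)} ≤ driftTailBound δ := by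
  have hset : {ω | δ < logDrift (List.ofFn fun i ↦ X i ω)} =
      (fun ω i ↦ X i ω) ⁻¹' ↑({b | δ < logDrift (List.ofFn b)} : Finset (Fin n → Bool)) := by
    ext; simp
  rw [measureReal_def, hset, measure_preimage_finset_of_iIndepFun_fair hX hind hfair]
  simp only [ENNReal.toReal_mul, ENNReal.toReal_natCast, ENNReal.toReal_pow, ENNReal.toReal_inv,
    ENNReal.toReal_ofNat, inv_pow, ← div_eq_mul_inv]
  rw [div_le_iff₀ (by positivity), mul_comm]
  exact card_logDrift_gt_le n δ

end FairBits

lemma driftTailBound_neg_logb_sub_le {z0 : ℝ} (hz0 : 0 < z0) (β : ℝ) :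
    driftTailBound (-Real.logb 2 z0 - β) ≤ 2 ^ (1 + β / 2) * √z0 := by
  refine (min_le_right _ _).trans_eq ?_
  rw [show 1 - (-Real.logb 2 z0 - β) / 2 = (1 + β / 2) + Real.logb 2 z0 * (1 / 2) by ring,
    Real.rpow_add two_pos, Real.rpow_mul zero_le_two,
    Real.rpow_logb two_pos (by norm_num) hz0, Real.sqrt_eq_rpow]

theorem upper_process_bound {Ω : Type*} [MeasurableSpace Ω] (μ : Measure Ω)
    [IsProbabilityMeasure μ]
    (B : ℕ → Ω → Bool) (hBmeas : ∀ n, Measurable (B n))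
    (hBindep : iIndepFun B μ)
    (hBhalf : ∀ n, μ {ω | B n ω = true} = 1/2)
    (Zu : ℕ → Ω → ℝ) (z0 : ℝ) (hz0 : z0 ∈ Set.Ioo (0:ℝ) 1)
    (hZ0 : ∀ ω, Zu 0 ω = z0)
    (hrec : ∀ n ω,
      (B (n+1) ω = true → Zu (n+1) ω = (Zu n ω)^2) ∧
      (B (n+1) ω = false → Zu (n+1) ω = 2 * Zu n ω)) :
    ∀ β : ℝ, 0 < β → z0 < (2:ℝ) ^ (-β) → ∀ n : ℕ,
      (μ {ω | Zu n ω ≤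
        (2:ℝ) ^ (-(β * 2 ^ (∑ i ∈ Finset.range n, (if B (i+1) ω then 1 else 0))))}).toReal ≥
      1 - 2 ^ (1 + β / 2) * Real.sqrt z0 := by
  intro β _ _ n
  set δ := -Real.logb 2 z0 - β
  have hgood (ω : Ω) : Zu n ω ≤ 2 ^ (-(β * 2 ^ (∑ i ∈ range n, if B (i + 1) ω then 1 else 0))) ↔
      logDrift (List.ofFn fun i : Fin n ↦ B (i + 1) ω) ≤ δ := by
    have horbit : IsUpperOrbit (fun i ↦ B (i + 1) ω) (fun k ↦ Zu k ω) := fun k ↦ hrec k ω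
    simpa only [hZ0] using horbit.le_two_rpow_iff (by simpa [hZ0] using hz0.1) n β
  have hbad := measureReal_logDrift_gt_le (X := fun (i : Fin n) ↦ B (i + 1)) (fun _ ↦ hBmeas _)
    (hBindep.precomp ((add_left_injective 1).comp Fin.val_injective)) (fun _ ↦ hBhalf _) δ
  set good := {ω | Zu n ω ≤ 2 ^ (-(β * 2 ^ (∑ i ∈ range n, if B (i + 1) ω then 1 else 0)))}
  set bad := {ω | δ < logDrift (List.ofFn fun i : Fin n ↦ B (i + 1) ω)}
  have hcover : good ∪ bad = Set.univ :=
    Set.eq_univ_of_forall fun ω ↦ (le_or_gt _ δ).imp_left (hgood ω).mpr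
  have hsum := measureReal_union_le (μ := μ) good bad
  rw [hcover, probReal_univ] at hsum
  rw [ge_iff_le, ← measureReal_def]
  linarith [driftTailBound_neg_logb_sub_le hz0.1 β]
end
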